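/- Let N ≥ 2 and ℓ, M₀ be positive integers. The assignment ψᵢ^{kℓ+p}(n) ↦ ψᵢ^{p}(M₀n − k) and ψ̄ᵢ^{kℓ+p}(n) ↦ ψ̄ᵢ^{p}(M₀n + k), for 1 ≤ i ≤ N, 0 ≤ k ≤ M₀−1, 1 ≤ p ≤ ℓ, n ∈ ℤ, extends uniquely to a ℂ-algebra isomorphism φ: 𝒞_N^{M₀ℓ} → 𝒞_N^ℓ. Moreover, the 𝒞_N^{M₀ℓ}-module obtained from the Fock space 𝓕_N^ℓ by restricting along φ is isomorphic to the Fock space 𝓕_N^{M₀ℓ}, via the unique linear isomorphism sending |0⟩ to |0⟩ and intertwining the 𝒞_N^{M₀ℓ}-actions. -/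

import Mathlib

/-- Generators of the Clifford algebra `𝒞_N^ℓ`: `ψᵢᵖ(m)` and `ψ̄ᵢᵖ(m)` for
`1 ≤ i ≤ N`, `1 ≤ p ≤ ℓ`, `m ∈ ℤ`. -/
inductive CGen (N ℓ : ℕ) : Type
  | psi  (i : Fin N) (p : Fin ℓ) (m : ℤ) : CGen N ℓ
  | psib (i : Fin N) (p : Fin ℓ) (m : ℤ) : CGen N ℓ

/-- The Clifford (CAR) relations among the generators. -/
inductive CRel (N ℓ : ℕ) :
    FreeAlgebra ℂ (CGen N ℓ) → FreeAlgebra ℂ (CGen N ℓ) → Prop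
  | anti_pp (i j : Fin N) (p r : Fin ℓ) (m n : ℤ) :
      CRel N ℓ (FreeAlgebra.ι ℂ (CGen.psi i p m) * FreeAlgebra.ι ℂ (CGen.psi j r n)
        + FreeAlgebra.ι ℂ (CGen.psi j r n) * FreeAlgebra.ι ℂ (CGen.psi i p m)) 0
  | anti_bb (i j : Fin N) (p r : Fin ℓ) (m n : ℤ) :
      CRel N ℓ (FreeAlgebra.ι ℂ (CGen.psib i p m) * FreeAlgebra.ι ℂ (CGen.psib j r n)
        + FreeAlgebra.ι ℂ (CGen.psib j r n) * FreeAlgebra.ι ℂ (CGen.psib i p m)) 0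
  | mixed (i j : Fin N) (p r : Fin ℓ) (m n : ℤ) :
      CRel N ℓ (FreeAlgebra.ι ℂ (CGen.psi i p m) * FreeAlgebra.ι ℂ (CGen.psib j r n)
        + FreeAlgebra.ι ℂ (CGen.psib j r n) * FreeAlgebra.ι ℂ (CGen.psi i p m))
        (if i = j ∧ p = r ∧ m + n = 0 then 1 else 0)

/-- The Clifford algebra `𝒞_N^ℓ`, presented by generators and relations. -/
abbrev CliffordNL (N ℓ : ℕ) : Type := RingQuot (CRel N ℓ)

/-- The generator `ψᵢᵖ(m)` of `𝒞_N^ℓ`. -/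
noncomputable def cPsi {N ℓ : ℕ} (i : Fin N) (p : Fin ℓ) (m : ℤ) : CliffordNL N ℓ :=
  RingQuot.mkAlgHom ℂ (CRel N ℓ) (FreeAlgebra.ι ℂ (CGen.psi i p m))

/-- The generator `ψ̄ᵢᵖ(m)` of `𝒞_N^ℓ`. -/
noncomputable def cPsib {N ℓ : ℕ} (i : Fin N) (p : Fin ℓ) (m : ℤ) : CliffordNL N ℓ :=
  RingQuot.mkAlgHom ℂ (CRel N ℓ) (FreeAlgebra.ι ℂ (CGen.psib i p m))

/-- The left ideal of annihilation operators: generated by the `ψᵢᵖ(m)` with `m ≥ 1` and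
the `ψ̄ᵢᵖ(m)` with `m ≥ 0`. -/
noncomputable def fockIdeal (N ℓ : ℕ) : Submodule (CliffordNL N ℓ) (CliffordNL N ℓ) :=
  Submodule.span (CliffordNL N ℓ)
    {x | ∃ (i : Fin N) (p : Fin ℓ) (m : ℤ),
      (1 ≤ m ∧ x = cPsi i p m) ∨ (0 ≤ m ∧ x = cPsib i p m)}

/-- The fermionic Fock space `𝓕_N^ℓ`, as the quotient of `𝒞_N^ℓ` by the left ideal of
annihilation operators; it is a cyclic `𝒞_N^ℓ`-module. -/
abbrev FockNL (N ℓ : ℕ) : Type := CliffordNL N ℓ ⧸ fockIdeal N ℓ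

/-- The vacuum vector `|0⟩ ∈ 𝓕_N^ℓ`. -/
noncomputable def fockVac (N ℓ : ℕ) : FockNL N ℓ :=
  Submodule.Quotient.mk (1 : CliffordNL N ℓ)

/-- The normally ordered product `:ψᵢᵖ(m) ψ̄ⱼʳ(n):`. -/
noncomputable def nord {N ℓ : ℕ} (i j : Fin N) (p r : Fin ℓ) (m n : ℤ) : CliffordNL N ℓ :=
  if 0 ≤ n then cPsi i p m * cPsib j r n else -(cPsib j r n * cPsi i p m)

/-- The index `kℓ + p` in `Fin (M₀ * ℓ)` associated to `k : Fin M₀` and `p : Fin ℓ`. -/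
def mixIdx {M0 ℓ : ℕ} (k : Fin M0) (p : Fin ℓ) : Fin (M0 * ℓ) :=
  ⟨k.1 * ℓ + p.1, by
    calc k.1 * ℓ + p.1 < k.1 * ℓ + ℓ := by omega
    _ = (k.1 + 1) * ℓ := by ring
    _ ≤ M0 * ℓ := Nat.mul_le_mul_right ℓ k.isLt⟩

/-!
The map `φ` only relabels modes: `(kℓ + p, n) ↦ (p, M₀ n - k)` is a bijection
`Fin (M₀ℓ) × ℤ ≃ Fin ℓ × ℤ` (division with remainder by `M₀`), and any injective relabelling
`σ` of the modes of `ψ`, applied to `ψ̄` through the conjugate `m ↦ -σ(q, -m)`, preserves the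
Clifford relations, so a bijection yields an algebra isomorphism. Since `M₀ n - k > 0` exactly
when `n > 0`, this isomorphism matches the annihilation operators on both sides, hence the left
ideals defining the Fock spaces, and it descends to the cyclic quotients.
-/

open Function

namespace Ideal

variable {R A B : Type*} [CommRing R] [Ring A] [Ring B] [Algebra R A] [Algebra R B]
  {I : Ideal A} {J : Ideal B}

noncomputable def leftQuotientMap (f : A →ₐ[R] B) (h : ∀ x ∈ I, f x ∈ J) : A ⧸ I →ₗ[R] B ⧸ J :=
  Submodule.Quotient.restrictScalarsEquiv R J ∘ₗ
    (I.restrictScalars R).mapQ (J.restrictScalars R) f.toLinearMap h ∘ₗ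
    (Submodule.Quotient.restrictScalarsEquiv R I).symm.toLinearMap

variable {f : A →ₐ[R] B} {h : ∀ x ∈ I, f x ∈ J}

@[simp]
theorem leftQuotientMap_mk (x : A) :
    leftQuotientMap f h (Submodule.Quotient.mk x) = Submodule.Quotient.mk (f x) :=
  rfl

theorem leftQuotientMap_mk_one :
    leftQuotientMap f h (Submodule.Quotient.mk 1) = Submodule.Quotient.mk 1 := by
  rw [leftQuotientMap_mk, map_one]

theorem leftQuotientMap_smul (x : A) (v : A ⧸ I) :
    leftQuotientMap f h (x • v) = f x • leftQuotientMap f h v := by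
  obtain ⟨y, rfl⟩ := Submodule.Quotient.mk_surjective I v
  rw [← Submodule.Quotient.mk_smul, leftQuotientMap_mk, leftQuotientMap_mk, smul_eq_mul,
    map_mul, ← Submodule.Quotient.mk_smul, smul_eq_mul]

theorem eq_leftQuotientMap {Φ : A ⧸ I →ₗ[R] B ⧸ J}
    (h1 : Φ (Submodule.Quotient.mk 1) = Submodule.Quotient.mk 1)
    (hsmul : ∀ x v, Φ (x • v) = f x • Φ v) : Φ = leftQuotientMap f h := by
  refine LinearMap.ext fun v => ?_
  obtain ⟨y, rfl⟩ := Submodule.Quotient.mk_surjective I v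
  have hy : (Submodule.Quotient.mk y : A ⧸ I) = y • Submodule.Quotient.mk 1 := by
    rw [← Submodule.Quotient.mk_smul, smul_eq_mul, mul_one]
  rw [hy, hsmul, leftQuotientMap_smul, h1, leftQuotientMap_mk_one]

theorem leftQuotientMap_bijective (e : A ≃ₐ[R] B) (hI : ∀ x ∈ I, e x ∈ J)
    (hJ : ∀ y ∈ J, e.symm y ∈ I) : Bijective (leftQuotientMap (e : A →ₐ[R] B) hI) := by
  refine bijective_iff_has_inverse.mpr ⟨leftQuotientMap (e.symm : B →ₐ[R] A) hJ, ?_, ?_⟩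
  · rintro ⟨x⟩
    exact congrArg Submodule.Quotient.mk (e.symm_apply_apply x)
  · rintro ⟨y⟩
    exact congrArg Submodule.Quotient.mk (e.apply_symm_apply y)

end Ideal

namespace CliffordNL

variable {N a b : ℕ}

theorem cPsi_anticomm (i j : Fin N) (p r : Fin a) (m n : ℤ) :
    cPsi i p m * cPsi j r n + cPsi j r n * cPsi i p m = 0 := by
  simpa only [cPsi, map_add, map_mul, map_zero] using
    RingQuot.mkAlgHom_rel ℂ (CRel.anti_pp i j p r m n)

theorem cPsib_anticomm (i j : Fin N) (p r : Fin a) (m n : ℤ) :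
    cPsib i p m * cPsib j r n + cPsib j r n * cPsib i p m = 0 := by
  simpa only [cPsib, map_add, map_mul, map_zero] using
    RingQuot.mkAlgHom_rel ℂ (CRel.anti_bb i j p r m n)

theorem cPsi_cPsib_anticomm (i j : Fin N) (p r : Fin a) (m n : ℤ) :
    cPsi i p m * cPsib j r n + cPsib j r n * cPsi i p m =
      if i = j ∧ p = r ∧ m + n = 0 then 1 else 0 := by
  simpa only [cPsi, cPsib, map_add, map_mul, apply_ite (RingQuot.mkAlgHom ℂ (CRel N a)), map_one,
    map_zero] using RingQuot.mkAlgHom_rel ℂ (CRel.mixed i j p r m n)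

theorem algHom_ext {C : Type*} [Semiring C] [Algebra ℂ C] {F G : CliffordNL N a →ₐ[ℂ] C}
    (hpsi : ∀ i p m, F (cPsi i p m) = G (cPsi i p m))
    (hpsib : ∀ i p m, F (cPsib i p m) = G (cPsib i p m)) : F = G := by
  refine RingQuot.ringQuot_ext' (S := ℂ) F G (FreeAlgebra.hom_ext (funext fun g => ?_))
  cases g with
  | psi i p m => exact hpsi i p m
  | psib i p m => exact hpsib i p m

/-- The modes of `ψ̄` are relabelled by the conjugate `m ↦ -σ(q, -m)`, so that the pairing
`m + n = 0` of the relation between `ψ(m)` and `ψ̄(n)` is preserved. -/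
noncomputable def relabelGen (σ : Fin a × ℤ → Fin b × ℤ) : CGen N a → CliffordNL N b
  | .psi i q m => cPsi i (σ (q, m)).1 (σ (q, m)).2
  | .psib i q m => cPsib i (σ (q, -m)).1 (-(σ (q, -m)).2)

theorem relabelGen_rel {σ : Fin a × ℤ → Fin b × ℤ} (hσ : Injective σ) ⦃x y⦄
    (h : CRel N a x y) :
    FreeAlgebra.lift ℂ (relabelGen σ) x = FreeAlgebra.lift ℂ (relabelGen σ) y := by
  induction h with
  | anti_pp i j q r m n => simpa [relabelGen] using cPsi_anticomm ..
  | anti_bb i j q r m n => simpa [relabelGen] using cPsib_anticomm ..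
  | mixed i j q r m n =>
    have hpair : ((σ (q, m)).1 = (σ (r, -n)).1 ∧ (σ (q, m)).2 + -(σ (r, -n)).2 = 0) ↔
        (q = r ∧ m + n = 0) := by
      calc _ ↔ σ (q, m) = σ (r, -n) := by rw [Prod.ext_iff, add_neg_eq_zero]
        _ ↔ (q, m) = (r, -n) := hσ.eq_iff
        _ ↔ _ := by rw [Prod.mk.injEq, eq_neg_iff_add_eq_zero]
    simp only [relabelGen, map_add, map_mul, FreeAlgebra.lift_ι_apply,
      apply_ite (FreeAlgebra.lift ℂ (relabelGen σ)), map_one, map_zero]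
    rw [cPsi_cPsib_anticomm]
    exact if_congr (and_congr_right' hpair) rfl rfl

noncomputable def relabel (σ : Fin a × ℤ → Fin b × ℤ) (hσ : Injective σ) :
    CliffordNL N a →ₐ[ℂ] CliffordNL N b :=
  RingQuot.liftAlgHom ℂ ⟨FreeAlgebra.lift ℂ (relabelGen σ), relabelGen_rel hσ⟩

variable {σ : Fin a × ℤ → Fin b × ℤ} {hσ : Injective σ}

@[simp]
theorem relabel_cPsi (i : Fin N) (q : Fin a) (m : ℤ) :
    relabel σ hσ (cPsi i q m) = cPsi i (σ (q, m)).1 (σ (q, m)).2 := by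
  simp [relabel, cPsi, relabelGen]

@[simp]
theorem relabel_cPsib (i : Fin N) (q : Fin a) (m : ℤ) :
    relabel σ hσ (cPsib i q m) = cPsib i (σ (q, -m)).1 (-(σ (q, -m)).2) := by
  simp [relabel, cPsib, relabelGen]

theorem relabel_comp {c : ℕ} {τ : Fin b × ℤ → Fin c × ℤ} (hτ : Injective τ) :
    (relabel τ hτ).comp (relabel σ hσ) = relabel (N := N) (τ ∘ σ) (hτ.comp hσ) :=
  algHom_ext (fun _ _ _ => by simp) (fun _ _ _ => by simp)

theorem relabel_id : relabel id injective_id = AlgHom.id ℂ (CliffordNL N a) :=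
  algHom_ext (fun _ _ _ => by simp) (fun _ _ _ => by simp)

noncomputable def relabelEquiv (e : Fin a × ℤ ≃ Fin b × ℤ) :
    CliffordNL N a ≃ₐ[ℂ] CliffordNL N b :=
  AlgEquiv.ofAlgHom (relabel e e.injective) (relabel e.symm e.symm.injective)
    (by rw [relabel_comp, ← relabel_id]; congr; exact e.self_comp_symm)
    (by rw [relabel_comp, ← relabel_id]; congr; exact e.symm_comp_self)

theorem relabel_mem_fockIdeal (hpos : ∀ x, 0 < (σ x).2 ↔ 0 < x.2) {x : CliffordNL N a}
    (hx : x ∈ fockIdeal N a) : relabel σ hσ x ∈ fockIdeal N b := by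
  suffices fockIdeal N a ≤ Ideal.comap (relabel σ hσ) (fockIdeal N b) from this hx
  refine Submodule.span_le.mpr ?_
  rintro _ ⟨i, q, m, ⟨hm, rfl⟩ | ⟨hm, rfl⟩⟩
  · exact Submodule.subset_span ⟨i, _, _, Or.inl ⟨(hpos (q, m)).mpr hm, relabel_cPsi i q m⟩⟩
  · refine Submodule.subset_span ⟨i, _, _, Or.inr ⟨?_, relabel_cPsib i q m⟩⟩
    have := (hpos (q, -m)).not.mpr (by simpa using hm)
    omega

theorem relabelEquiv_symm_mem_fockIdeal {e : Fin a × ℤ ≃ Fin b × ℤ}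
    (hpos : ∀ x, 0 < (e x).2 ↔ 0 < x.2) {y : CliffordNL N b} (hy : y ∈ fockIdeal N b) :
    (relabelEquiv e).symm y ∈ fockIdeal N a :=
  relabel_mem_fockIdeal (fun y => by rw [← hpos, e.apply_symm_apply]) hy

end CliffordNL

section BlockIndex

variable {M0 ℓ : ℕ}

theorem mixIdx_eq_finProdFinEquiv (k : Fin M0) (p : Fin ℓ) :
    mixIdx k p = finProdFinEquiv (k, p) :=
  Fin.ext (by simp [mixIdx, add_comm, mul_comm])

variable [NeZero M0]

/-- `(k, n) ↦ M₀ n - k`; it is a bijection because `k` is the residue of `k - M₀ n` mod `M₀`. -/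
def Int.mulSubFinEquiv (M0 : ℕ) [NeZero M0] : Fin M0 × ℤ ≃ ℤ :=
  (Equiv.prodComm _ _).trans <| ((Equiv.neg ℤ).prodCongr (Equiv.refl _)).trans <|
    (Int.divModEquiv M0).symm.trans (Equiv.neg ℤ)

theorem Int.mulSubFinEquiv_apply (k : Fin M0) (n : ℤ) :
    Int.mulSubFinEquiv M0 (k, n) = M0 * n - k := by
  simp only [Int.mulSubFinEquiv, Equiv.trans_apply, Equiv.prodComm_apply, Prod.swap_prod_mk,
    Equiv.prodCongr_apply, Prod.map, Equiv.neg_apply, Equiv.refl_apply, Int.divModEquiv_symm_apply]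
  ring

theorem Int.zero_lt_mulSubFinEquiv_iff (x : Fin M0 × ℤ) :
    0 < Int.mulSubFinEquiv M0 x ↔ 0 < x.2 := by
  obtain ⟨k, n⟩ := x
  rw [Int.mulSubFinEquiv_apply]
  have hk : (k : ℤ) < M0 := by exact_mod_cast k.isLt
  constructor <;> intro h
  · by_contra! hn
    nlinarith
  · nlinarith

def blockEquiv (M0 ℓ : ℕ) [NeZero M0] : Fin (M0 * ℓ) × ℤ ≃ Fin ℓ × ℤ :=
  ((finProdFinEquiv.symm.trans (Equiv.prodComm _ _)).prodCongr (Equiv.refl ℤ)).trans <|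
    (Equiv.prodAssoc _ _ _).trans ((Equiv.refl _).prodCongr (Int.mulSubFinEquiv M0))

theorem blockEquiv_mixIdx (k : Fin M0) (p : Fin ℓ) (n : ℤ) :
    blockEquiv M0 ℓ (mixIdx k p, n) = (p, M0 * n - k) := by
  simp [blockEquiv, mixIdx_eq_finProdFinEquiv, Int.mulSubFinEquiv_apply]

theorem zero_lt_blockEquiv_snd_iff (x : Fin (M0 * ℓ) × ℤ) :
    0 < (blockEquiv M0 ℓ x).2 ↔ 0 < x.2 :=
  Int.zero_lt_mulSubFinEquiv_iff _

end BlockIndex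

namespace CliffordNL

variable {N M0 ℓ : ℕ}

theorem algHom_ext_mixIdx {C : Type*} [Semiring C] [Algebra ℂ C]
    {F G : CliffordNL N (M0 * ℓ) →ₐ[ℂ] C}
    (h : ∀ i k p n, F (cPsi i (mixIdx k p) n) = G (cPsi i (mixIdx k p) n) ∧
      F (cPsib i (mixIdx k p) n) = G (cPsib i (mixIdx k p) n)) : F = G := by
  have hsurj : ∀ q : Fin (M0 * ℓ), ∃ k p, mixIdx k p = q := fun q =>
    ⟨_, _, (mixIdx_eq_finProdFinEquiv _ _).trans (finProdFinEquiv.apply_symm_apply q)⟩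
  refine algHom_ext (fun i q n => ?_) (fun i q n => ?_) <;>
    obtain ⟨k, p, rfl⟩ := hsurj q
  exacts [(h i k p n).1, (h i k p n).2]

theorem relabelEquiv_blockEquiv_mixIdx [NeZero M0] (i : Fin N) (k : Fin M0) (p : Fin ℓ)
    (n : ℤ) :
    relabelEquiv (blockEquiv M0 ℓ) (cPsi i (mixIdx k p) n) = cPsi i p (M0 * n - k) ∧
    relabelEquiv (blockEquiv M0 ℓ) (cPsib i (mixIdx k p) n) = cPsib i p (M0 * n + k) := by
  refine ⟨?_, ?_⟩ <;> simp [relabelEquiv, blockEquiv_mixIdx, add_comm]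

end CliffordNL

open CliffordNL in
theorem clifford_decomposition_iso_general (N : ℕ) (ℓ M0 : ℕ) (hM0 : 0 < M0) :
    (∃! φ : CliffordNL N (M0 * ℓ) →ₐ[ℂ] CliffordNL N ℓ,
      ∀ (i : Fin N) (k : Fin M0) (p : Fin ℓ) (n : ℤ),
        φ (cPsi i (mixIdx k p) n) = cPsi i p (M0 * n - k.1) ∧
        φ (cPsib i (mixIdx k p) n) = cPsib i p (M0 * n + k.1)) ∧
    (∀ φ : CliffordNL N (M0 * ℓ) →ₐ[ℂ] CliffordNL N ℓ,
      (∀ (i : Fin N) (k : Fin M0) (p : Fin ℓ) (n : ℤ),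
        φ (cPsi i (mixIdx k p) n) = cPsi i p (M0 * n - k.1) ∧
        φ (cPsib i (mixIdx k p) n) = cPsib i p (M0 * n + k.1)) →
      Function.Bijective φ ∧
      (∃! Φ : FockNL N (M0 * ℓ) →ₗ[ℂ] FockNL N ℓ,
        Φ (fockVac N (M0 * ℓ)) = fockVac N ℓ ∧
        ∀ (x : CliffordNL N (M0 * ℓ)) (v : FockNL N (M0 * ℓ)),
          Φ (x • v) = φ x • Φ v) ∧
      (∀ Φ : FockNL N (M0 * ℓ) →ₗ[ℂ] FockNL N ℓ,
        Φ (fockVac N (M0 * ℓ)) = fockVac N ℓ →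
        (∀ (x : CliffordNL N (M0 * ℓ)) (v : FockNL N (M0 * ℓ)),
          Φ (x • v) = φ x • Φ v) →
        Function.Bijective Φ)) := by
  have : NeZero M0 := ⟨hM0.ne'⟩
  set e := relabelEquiv (N := N) (blockEquiv M0 ℓ)
  have he := relabelEquiv_blockEquiv_mixIdx (N := N) (M0 := M0) (ℓ := ℓ)
  have huniq : ∀ φ : CliffordNL N (M0 * ℓ) →ₐ[ℂ] CliffordNL N ℓ,
      (∀ i k p n, φ (cPsi i (mixIdx k p) n) = cPsi i p (M0 * n - k.1) ∧
        φ (cPsib i (mixIdx k p) n) = cPsib i p (M0 * n + k.1)) → φ = e := fun φ hφ =>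
    algHom_ext_mixIdx fun i k p n => ⟨(hφ i k p n).1.trans (he i k p n).1.symm,
      (hφ i k p n).2.trans (he i k p n).2.symm⟩
  refine ⟨⟨e, he, huniq⟩, fun φ hφ => ?_⟩
  obtain rfl := huniq φ hφ
  have hI : ∀ x ∈ fockIdeal N (M0 * ℓ), e x ∈ fockIdeal N ℓ := fun _ =>
    relabel_mem_fockIdeal zero_lt_blockEquiv_snd_iff
  have hJ : ∀ y ∈ fockIdeal N ℓ, e.symm y ∈ fockIdeal N (M0 * ℓ) := fun _ =>
    relabelEquiv_symm_mem_fockIdeal zero_lt_blockEquiv_snd_iff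
  set Φ₀ := Ideal.leftQuotientMap (e : CliffordNL N (M0 * ℓ) →ₐ[ℂ] CliffordNL N ℓ) hI
  refine ⟨e.bijective, ⟨Φ₀, ⟨Ideal.leftQuotientMap_mk_one, Ideal.leftQuotientMap_smul⟩,
      fun Φ hΦ => Ideal.eq_leftQuotientMap hΦ.1 hΦ.2⟩,
    fun Φ h1 h2 => Ideal.eq_leftQuotientMap h1 h2 ▸ Ideal.leftQuotientMap_bijective e hI hJ⟩

/-- the assignment `ψᵢ^{kℓ+p}(n) ↦ ψᵢᵖ(M₀n - k)`,
`ψ̄ᵢ^{kℓ+p}(n) ↦ ψ̄ᵢᵖ(M₀n + k)` extends uniquely to a `ℂ`-algebra isomorphism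
`φ : 𝒞_N^{M₀ℓ} → 𝒞_N^ℓ`, and the `𝒞_N^{M₀ℓ}`-module obtained from `𝓕_N^ℓ` by restriction
along `φ` is isomorphic to `𝓕_N^{M₀ℓ}` via the unique linear map sending `|0⟩` to `|0⟩`
and intertwining the `𝒞_N^{M₀ℓ}`-actions; moreover this map is bijective. -/
theorem clifford_decomposition_iso (N : ℕ) (hN : 2 ≤ N) (ℓ M0 : ℕ) (hℓ : 0 < ℓ)
    (hM0 : 0 < M0) :
    (∃! φ : CliffordNL N (M0 * ℓ) →ₐ[ℂ] CliffordNL N ℓ,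
      ∀ (i : Fin N) (k : Fin M0) (p : Fin ℓ) (n : ℤ),
        φ (cPsi i (mixIdx k p) n) = cPsi i p (M0 * n - k.1) ∧
        φ (cPsib i (mixIdx k p) n) = cPsib i p (M0 * n + k.1)) ∧
    (∀ φ : CliffordNL N (M0 * ℓ) →ₐ[ℂ] CliffordNL N ℓ,
      (∀ (i : Fin N) (k : Fin M0) (p : Fin ℓ) (n : ℤ),
        φ (cPsi i (mixIdx k p) n) = cPsi i p (M0 * n - k.1) ∧
        φ (cPsib i (mixIdx k p) n) = cPsib i p (M0 * n + k.1)) →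
      Function.Bijective φ ∧
      (∃! Φ : FockNL N (M0 * ℓ) →ₗ[ℂ] FockNL N ℓ,
        Φ (fockVac N (M0 * ℓ)) = fockVac N ℓ ∧
        ∀ (x : CliffordNL N (M0 * ℓ)) (v : FockNL N (M0 * ℓ)),
          Φ (x • v) = φ x • Φ v) ∧
      (∀ Φ : FockNL N (M0 * ℓ) →ₗ[ℂ] FockNL N ℓ,
        Φ (fockVac N (M0 * ℓ)) = fockVac N ℓ →
        (∀ (x : CliffordNL N (M0 * ℓ)) (v : FockNL N (M0 * ℓ)),
          Φ (x • v) = φ x • Φ v) →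
        Function.Bijective Φ)) :=
  clifford_decomposition_iso_general N ℓ M0 hM0
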